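/- Let ρ be a density matrix on ℂ^d ⊗ ℂ^d, let k ≥ 1, and let F = {F_{a|x}} be a steering functional on ℂ^{d^k} with F_{a|x} positive semidefinite (and ω_s(F) > 0). If the fully entangled fraction satisfies F(ρ) > [1 / LV_s(|Ψ_{d^k}^+⟩⟨Ψ_{d^k}^+|, F)]^{1/k}, then ρ^⊗k, viewed as a bipartite state on ℂ^{d^k} ⊗ ℂ^{d^k} by grouping all of Alice's tensor factors together and all of Bob's tensor factors together, is steerable from Alice to Bob: there exists an Alice POVM family on ℂ^{d^k} such that the assemblage induced by ρ^⊗k and this POVM family is not unsteerable. -/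

import Mathlib

open scoped ComplexOrder Kronecker Matrix
open MeasureTheory

noncomputable section

namespace QSteer

/-- Square complex matrices indexed by `ι` (the Hilbert space `ℂ^ι`). -/
abbrev HMat (ι : Type) : Type := Matrix ι ι ℂ

/-- A density matrix: positive semidefinite with unit trace. -/
def IsDensity {ι : Type} [Fintype ι] (ρ : HMat ι) : Prop :=
  ρ.PosSemidef ∧ ρ.trace = 1

/-- A POVM family `{E_{a|x}}`: positive semidefinite effects summing to the identity
for every setting `x`. -/
def IsPOVM {ι A X : Type} [Fintype ι] [Fintype A] [DecidableEq ι]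
    (E : A → X → HMat ι) : Prop :=
  (∀ a x, (E a x).PosSemidef) ∧ ∀ x, ∑ a, E a x = 1

/-- A projective measurement family: a POVM family whose effects are orthogonal
projections. -/
def IsProjPOVM {ι A X : Type} [Fintype ι] [Fintype A] [DecidableEq ι]
    (E : A → X → HMat ι) : Prop :=
  IsPOVM E ∧ ∀ a x, (E a x).IsHermitian ∧ E a x * E a x = E a x

/-- An assemblage `{σ_{a|x}}`: positive semidefinite matrices such that `∑_a σ_{a|x}`
is the same unit-trace matrix for every `x`. -/
def IsAssemblage {ι A X : Type} [Fintype ι] [Fintype A] (σ : A → X → HMat ι) : Prop :=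
  (∀ a x, (σ a x).PosSemidef) ∧ (∀ x x', ∑ a, σ a x = ∑ a, σ a x') ∧
    ∀ x, (∑ a, σ a x).trace = 1

/-- An unsteerable assemblage: one admitting a local-hidden-state model. -/
def IsUnsteerable {ι A X : Type} [Fintype ι] [Fintype A] (σ : A → X → HMat ι) : Prop :=
  ∃ (n : ℕ) (w : Fin n → ℝ) (p : A → X → Fin n → ℝ) (τ : Fin n → HMat ι),
    (∀ l, 0 ≤ w l) ∧ (∑ l, w l = 1) ∧
    (∀ a x l, 0 ≤ p a x l) ∧ (∀ x l, ∑ a, p a x l = 1) ∧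
    (∀ l, IsDensity (τ l)) ∧
    ∀ a x, σ a x = ∑ l, (w l * p a x l) • τ l

/-- A steering functional `{F_{a|x}}`: a family of positive semidefinite matrices. -/
def IsSteeringFunctional {ι A X : Type} [Fintype ι] (F : A → X → HMat ι) : Prop :=
  ∀ a x, (F a x).PosSemidef

/-- The value `∑_{a,x} tr(F_{a|x} σ_{a|x})` (real part). -/
def steeringValue {ι A X : Type} [Fintype ι] [Fintype A] [Fintype X]
    (F σ : A → X → HMat ι) : ℝ :=
  ∑ x, ∑ a, ((F a x * σ a x).trace).re

/-- The steering bound `ω_s(F)`. -/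
def steeringBound {ι A X : Type} [Fintype ι] [Fintype A] [Fintype X]
    (F : A → X → HMat ι) : ℝ :=
  sSup {r : ℝ | ∃ σ : A → X → HMat ι, IsAssemblage σ ∧ IsUnsteerable σ ∧
    r = steeringValue F σ}

/-- The steering fraction `Γ_s(σ, F)`. -/
def steeringFraction {ι A X : Type} [Fintype ι] [Fintype A] [Fintype X]
    (σ F : A → X → HMat ι) : ℝ :=
  steeringValue F σ / steeringBound F

/-- Partial trace over the first (Alice's) tensor factor. -/
def ptraceA {ιA ιB : Type} [Fintype ιA] (M : Matrix (ιA × ιB) (ιA × ιB) ℂ) : HMat ιB :=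
  Matrix.of fun j j' => ∑ i, M (i, j) (i, j')

/-- The assemblage induced by a bipartite state and Alice's POVMs:
`σ_{a|x} = Tr_A[ρ (E_{a|x} ⊗ I)]`. -/
def inducedAssemblage {ιA ιB A X : Type} [Fintype ιA] [Fintype ιB] [DecidableEq ιB]
    (ρ : Matrix (ιA × ιB) (ιA × ιB) ℂ) (E : A → X → HMat ιA) : A → X → HMat ιB :=
  fun a x => ptraceA (ρ * ((E a x) ⊗ₖ (1 : HMat ιB)))

/-- Largest steering-inequality violation `LV_s(ρ, F)` over Alice POVM families. -/
def LVs {ιA ιB A X : Type} [Fintype ιA] [Fintype ιB] [DecidableEq ιA] [DecidableEq ιB]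
    [Fintype A] [Fintype X]
    (ρ : Matrix (ιA × ιB) (ιA × ιB) ℂ) (F : A → X → HMat ιB) : ℝ :=
  sSup {r : ℝ | ∃ E : A → X → HMat ιA, IsPOVM E ∧
    r = steeringFraction (inducedAssemblage ρ E) F}

/-- Largest steering-inequality violation `LV_s^π(ρ, F)` over projective Alice families. -/
def LVsProj {ιA ιB A X : Type} [Fintype ιA] [Fintype ιB] [DecidableEq ιA] [DecidableEq ιB]
    [Fintype A] [Fintype X]
    (ρ : Matrix (ιA × ιB) (ιA × ιB) ℂ) (F : A → X → HMat ιB) : ℝ :=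
  sSup {r : ℝ | ∃ E : A → X → HMat ιA, IsProjPOVM E ∧
    r = steeringFraction (inducedAssemblage ρ E) F}

/-- The maximally entangled state `|Ψ⁺⟩⟨Ψ⁺|` on `ℂ^ι ⊗ ℂ^ι`. -/
def maxEnt (ι : Type) [Fintype ι] [DecidableEq ι] : Matrix (ι × ι) (ι × ι) ℂ :=
  Matrix.of fun pq rs => if pq.1 = pq.2 ∧ rs.1 = rs.2 then ((Fintype.card ι : ℂ))⁻¹ else 0

/-- The fully entangled fraction `F(ρ) = sup_U ⟨Ψ⁺|(U ⊗ I) ρ (U ⊗ I)†|Ψ⁺⟩`. -/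
def fef {ι : Type} [Fintype ι] [DecidableEq ι] (ρ : Matrix (ι × ι) (ι × ι) ℂ) : ℝ :=
  sSup {r : ℝ | ∃ U : Matrix ι ι ℂ, U ∈ Matrix.unitaryGroup ι ℂ ∧
    r = ((maxEnt ι * ((U ⊗ₖ (1 : HMat ι)) * ρ * ((U ⊗ₖ (1 : HMat ι))ᴴ))).trace).re}

/-- A local-hidden-variable (Bell-local) correlation. -/
def IsLHV {A B X Y : Type} [Fintype A] [Fintype B] (P : A → B → X → Y → ℝ) : Prop :=
  ∃ (n : ℕ) (w : Fin n → ℝ) (pA : A → X → Fin n → ℝ) (pB : B → Y → Fin n → ℝ),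
    (∀ l, 0 ≤ w l) ∧ (∑ l, w l = 1) ∧
    (∀ a x l, 0 ≤ pA a x l) ∧ (∀ x l, ∑ a, pA a x l = 1) ∧
    (∀ b y l, 0 ≤ pB b y l) ∧ (∀ y l, ∑ b, pB b y l = 1) ∧
    ∀ a b x y, P a b x y = ∑ l, w l * pA a x l * pB b y l

/-- The Bell value `∑ B_{ab|xy} P(a,b|x,y)`. -/
def bellValue {A B X Y : Type} [Fintype A] [Fintype B] [Fintype X] [Fintype Y]
    (Bf P : A → B → X → Y → ℝ) : ℝ :=
  ∑ x, ∑ y, ∑ a, ∑ b, Bf a b x y * P a b x y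

/-- The local bound `ω(B)`. -/
def localBound {A B X Y : Type} [Fintype A] [Fintype B] [Fintype X] [Fintype Y]
    (Bf : A → B → X → Y → ℝ) : ℝ :=
  sSup {r : ℝ | ∃ P : A → B → X → Y → ℝ, IsLHV P ∧ r = bellValue Bf P}

/-- The nonlocality fraction `Γ(P, B)`. -/
def nonlocalityFraction {A B X Y : Type} [Fintype A] [Fintype B] [Fintype X] [Fintype Y]
    (P Bf : A → B → X → Y → ℝ) : ℝ :=
  bellValue Bf P / localBound Bf

/-- The quantum correlation `P(a,b|x,y) = tr[ρ (E_{a|x} ⊗ E_{b|y})]`. -/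
def quantumCorr {ιA ιB A B X Y : Type} [Fintype ιA] [Fintype ιB]
    (ρ : Matrix (ιA × ιB) (ιA × ιB) ℂ) (EA : A → X → HMat ιA) (EB : B → Y → HMat ιB) :
    A → B → X → Y → ℝ :=
  fun a b x y => ((ρ * ((EA a x) ⊗ₖ (EB b y))).trace).re

/-- Largest Bell-inequality violation `LV(ρ, B)` over pairs of POVM families. -/
def LV {ιA ιB A B X Y : Type} [Fintype ιA] [Fintype ιB] [DecidableEq ιA] [DecidableEq ιB]
    [Fintype A] [Fintype B] [Fintype X] [Fintype Y]
    (ρ : Matrix (ιA × ιB) (ιA × ιB) ℂ) (Bf : A → B → X → Y → ℝ) : ℝ :=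
  sSup {r : ℝ | ∃ (EA : A → X → HMat ιA) (EB : B → Y → HMat ιB),
    IsPOVM EA ∧ IsPOVM EB ∧ r = nonlocalityFraction (quantumCorr ρ EA EB) Bf}

/-- Largest Bell-inequality violation `LV^π(ρ, B)` over pairs of projective families. -/
def LVProj {ιA ιB A B X Y : Type} [Fintype ιA] [Fintype ιB] [DecidableEq ιA] [DecidableEq ιB]
    [Fintype A] [Fintype B] [Fintype X] [Fintype Y]
    (ρ : Matrix (ιA × ιB) (ιA × ιB) ℂ) (Bf : A → B → X → Y → ℝ) : ℝ :=
  sSup {r : ℝ | ∃ (EA : A → X → HMat ιA) (EB : B → Y → HMat ιB),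
    IsProjPOVM EA ∧ IsProjPOVM EB ∧ r = nonlocalityFraction (quantumCorr ρ EA EB) Bf}

/-- The steering functional induced by a Bell functional and Bob's POVMs:
`F_{a|x} = ∑_{b,y} B_{ab|xy} E_{b|y}`. -/
def inducedF {ιB A B X Y : Type} [Fintype B] [Fintype Y]
    (Bf : A → B → X → Y → ℝ) (EB : B → Y → HMat ιB) : A → X → HMat ιB :=
  fun a x => ∑ y, ∑ b, Bf a b x y • EB b y

/-- The `k`-fold tensor power of a bipartite state, regrouped as a bipartite state on
`ℂ^{d^k} ⊗ ℂ^{d^k}` (Alice's factors grouped together, likewise Bob's). -/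
def tensorPower {ι : Type} (ρ : Matrix (ι × ι) (ι × ι) ℂ) (k : ℕ) :
    Matrix ((Fin k → ι) × (Fin k → ι)) ((Fin k → ι) × (Fin k → ι)) ℂ :=
  Matrix.of fun p q => ∏ t, ρ (p.1 t, p.2 t) (q.1 t, q.2 t)

/-- The isotropic state `ρ_iso(p) = p |Ψ⁺⟩⟨Ψ⁺| + (1-p) I/d²` on `ℂ^d ⊗ ℂ^d`. -/
def iso (d : ℕ) (p : ℝ) : Matrix (Fin d × Fin d) (Fin d × Fin d) ℂ :=
  p • maxEnt (Fin d) + ((1 - p) / (d : ℝ) ^ 2) • (1 : Matrix (Fin d × Fin d) (Fin d × Fin d) ℂ)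

/-- `sup_F Γ_s(σ, F)` over positive semidefinite steering functionals with positive
steering bound. -/
def supFrac {ι A X : Type} [Fintype ι] [Fintype A] [Fintype X] (σ : A → X → HMat ι) : ℝ :=
  sSup {r : ℝ | ∃ F : A → X → HMat ι, IsSteeringFunctional F ∧ 0 < steeringBound F ∧
    r = steeringFraction σ F}

/-- The optimal steering fraction `S_O(σ) = max{0, sup_F Γ_s(σ, F) − 1}`. -/
def SO {ι A X : Type} [Fintype ι] [Fintype A] [Fintype X] (σ : A → X → HMat ι) : ℝ :=
  max 0 (supFrac σ - 1)

/-- The steerable weight `S_W(σ)`. -/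
def SW {ι A X : Type} [Fintype ι] [Fintype A] [Fintype X] (σ : A → X → HMat ι) : ℝ :=
  sInf {ν : ℝ | 0 ≤ ν ∧ ν ≤ 1 ∧ ∃ σUS σS : A → X → HMat ι,
    IsAssemblage σUS ∧ IsUnsteerable σUS ∧ IsAssemblage σS ∧
    ∀ a x, σ a x = (1 - ν) • σUS a x + ν • σS a x}

/-- The steering robustness `S_R(σ)`. -/
def SR {ι A X : Type} [Fintype ι] [Fintype A] [Fintype X] (σ : A → X → HMat ι) : ℝ :=
  sInf {ν : ℝ | 0 ≤ ν ∧ ∃ τ : A → X → HMat ι, IsAssemblage τ ∧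
    IsUnsteerable (fun a x => (1 / (1 + ν)) • σ a x + (ν / (1 + ν)) • τ a x)}

/-- Separability of a bipartite state. -/
def IsSeparable {ιA ιB : Type} [Fintype ιA] [Fintype ιB]
    (ρ : Matrix (ιA × ιB) (ιA × ιB) ℂ) : Prop :=
  ∃ (n : ℕ) (w : Fin n → ℝ) (ρA : Fin n → HMat ιA) (ρB : Fin n → HMat ιB),
    (∀ l, 0 ≤ w l) ∧ (∑ l, w l = 1) ∧ (∀ l, IsDensity (ρA l)) ∧ (∀ l, IsDensity (ρB l)) ∧
    ρ = ∑ l, w l • ((ρA l) ⊗ₖ (ρB l))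

/-- The (unnormalized) output assemblage of a one-way LOCC subchannel acting on an
assemblage: `M(σ)_{a'|x'} = K (∑_{a,x} P(x|x') P(a'|x',a,x) σ_{a|x}) K†`. -/
def wired {ι ι₂ A X A' X' : Type} [Fintype ι] [Fintype A] [Fintype X]
    (K : Matrix ι₂ ι ℂ) (Px : X → X' → ℝ) (Pa : A' → X' → A → X → ℝ)
    (σ : A → X → HMat ι) : A' → X' → HMat ι₂ :=
  fun a' x' => K * (∑ x, ∑ a, (Px x x' * Pa a' x' a x) • σ a x) * Kᴴ

instance matMeasurableSpace {m n : Type} : MeasurableSpace (Matrix m n ℂ) :=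
  inferInstanceAs (MeasurableSpace (m → n → ℂ))

/-- The `(U ⊗ U*)`-twirl of a bipartite state with respect to a measure `μ` on the
unitary group (entrywise Bochner integral). -/
def twirl {ι : Type} [Fintype ι] [DecidableEq ι]
    (μ : Measure (Matrix.unitaryGroup ι ℂ)) (ρ : Matrix (ι × ι) (ι × ι) ℂ) :
    Matrix (ι × ι) (ι × ι) ℂ :=
  Matrix.of fun p q =>
    ∫ V : Matrix.unitaryGroup ι ℂ,
      ((((V : Matrix ι ι ℂ)) ⊗ₖ ((V : Matrix ι ι ℂ).map (starRingEnd ℂ))) * ρ *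
        ((((V : Matrix ι ι ℂ)) ⊗ₖ ((V : Matrix ι ι ℂ).map (starRingEnd ℂ)))ᴴ)) p q ∂μ


/-!
Suppose every Alice measurement on `ρ^⊗k` gives an unsteerable assemblage. This property is
invariant under local unitaries, so it also holds for `σ = ρ_U^⊗k`, where
`ρ_U = (U ⊗ 1) ρ (U ⊗ 1)†` is chosen with `p = ⟨Ψ_d|ρ_U|Ψ_d⟩ > LV_s^{-1/k}`; moreover
`⟨Ψ_{d^k}|σ|Ψ_{d^k}⟩ = p^k`.

Twirl `σ` with the operators `W ⊗ W̄`, `W` running over the Weyl–Heisenberg group of the abelian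
group `(ℤ/d)^k`. The twirled state `S = ∑_W (W ⊗ W̄) σ (W ⊗ W̄)†` satisfies
`Ψ S = S Ψ = N p^k Ψ` (with `N` the number of Weyl operators), hence `S ≥ N p^k Ψ`. Pairing with
the positive steering operator `T = ∑ E_{a|x} ⊗ F_{a|x}` of any Alice POVM `E` gives
`N p^k tr(Ψ T) ≤ tr(S T) ≤ N ω_s(F)`, since every term of `S` is a locally rotated copy of `σ`
whose assemblage is unsteerable. As `tr(Ψ T)` is the steering value of the assemblage that `E`
induces on `Ψ_{d^k}`, this says `p^k · LV_s(Ψ_{d^k}, F) ≤ 1`, a contradiction.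
-/

end QSteer

namespace Matrix

variable {n : Type*} [Fintype n]

lemma PosSemidef.trace_mul_nonneg {A B : Matrix n n ℂ} (hA : A.PosSemidef) (hB : B.PosSemidef) :
    0 ≤ (A * B).trace := by
  classical
  open scoped MatrixOrder in
  obtain ⟨C, rfl⟩ := CStarAlgebra.nonneg_iff_eq_star_mul_self.mp hB.nonneg
  rw [star_eq_conjTranspose, ← mul_assoc, trace_mul_comm]
  simpa [mul_assoc] using (hA.mul_mul_conjTranspose_same C).trace_nonneg

lemma PosSemidef.im_trace_mul_eq_zero {A B : Matrix n n ℂ} (hA : A.PosSemidef)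
    (hB : B.PosSemidef) : (A * B).trace.im = 0 :=
  (Complex.nonneg_iff.mp (hA.trace_mul_nonneg hB)).2.symm

lemma posSemidef_sub_smul_of_mul_eq [DecidableEq n] {P S : Matrix n n ℂ} (hP : P.IsHermitian)
    (hPP : P * P = P) (hS : S.PosSemidef) {c : ℂ} (hPS : P * S = c • P) (hSP : S * P = c • P) :
    (S - c • P).PosSemidef := by
  have : S - c • P = (1 - P) * S * (1 - P)ᴴ := by
    rw [conjTranspose_sub, conjTranspose_one, hP.eq]
    simp only [sub_mul, mul_sub, one_mul, mul_one, hPS, hSP, Matrix.smul_mul, hPP]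
    abel
  rw [this]
  exact hS.mul_mul_conjTranspose_same _

lemma sum_kronecker {α ι l m p q : Type*} [NonUnitalNonAssocSemiring α] (s : Finset ι)
    (A : ι → Matrix l m α) (B : Matrix p q α) : (∑ i ∈ s, A i) ⊗ₖ B = ∑ i ∈ s, A i ⊗ₖ B := by
  ext
  simp [kroneckerMap_apply, sum_apply, Finset.sum_mul]

def kronPow {R l m : Type*} [CommMonoid R] (M : Matrix l m R) (k : ℕ) :
    Matrix (Fin k → l) (Fin k → m) R :=
  of fun P Q => ∏ t, M (P t) (Q t)

section KronPow

variable {R : Type*} [CommSemiring R] {l m p : Type*} (k : ℕ)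

lemma kronPow_mul [Fintype m] (M : Matrix l m R) (N : Matrix m p R) :
    kronPow (M * N) k = kronPow M k * kronPow N k := by
  ext P Q
  simp only [kronPow, of_apply, mul_apply, Fintype.prod_sum, Finset.prod_mul_distrib]

lemma kronPow_one [DecidableEq m] : kronPow (1 : Matrix m m R) k = 1 := by
  ext P Q
  simp [kronPow, one_apply, Fintype.prod_boole, funext_iff]

lemma trace_kronPow [Fintype m] (M : Matrix m m R) : (kronPow M k).trace = M.trace ^ k := by
  simp only [trace, diag, kronPow, of_apply]
  rw [← Fin.prod_const, Fintype.prod_sum]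

lemma kronPow_conjTranspose [StarRing R] (M : Matrix l m R) : (kronPow M k)ᴴ = kronPow Mᴴ k := by
  ext P Q
  simp [kronPow, star_prod]

lemma kronPow_mem_unitaryGroup {S : Type*} [CommRing S] [StarRing S] [Fintype m] [DecidableEq m]
    {U : Matrix m m S} (hU : U ∈ unitaryGroup m S) : kronPow U k ∈ unitaryGroup (Fin k → m) S := by
  rw [mem_unitaryGroup_iff', star_eq_conjTranspose, kronPow_conjTranspose, ← kronPow_mul,
    ← star_eq_conjTranspose, Unitary.star_mul_self_of_mem hU, kronPow_one]

end KronPow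

end Matrix

lemma AddChar.sum_mul_conj {G : Type*} [AddCommGroup G] [Fintype G] [DecidableEq G] (r s : G) :
    ∑ ψ : AddChar G ℂ, ψ r * starRingEnd ℂ (ψ s) = if r = s then (Fintype.card G : ℂ) else 0 := by
  simp_rw [← AddChar.map_neg_eq_conj, ← AddChar.map_add_eq_mul, AddChar.sum_apply_eq_ite,
    add_neg_eq_zero]

namespace QSteer

open Matrix

section PartialTrace

variable {ιA ιB : Type} [Fintype ιA]

lemma ptraceA_eq_sum_submatrix (M : Matrix (ιA × ιB) (ιA × ιB) ℂ) :
    ptraceA M = ∑ i, M.submatrix (Prod.mk i) (Prod.mk i) := by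
  ext
  simp [ptraceA, Matrix.sum_apply]

lemma posSemidef_ptraceA {M : Matrix (ιA × ιB) (ιA × ιB) ℂ} (hM : M.PosSemidef) :
    (ptraceA M).PosSemidef := by
  rw [ptraceA_eq_sum_submatrix]
  exact posSemidef_sum _ fun i _ => hM.submatrix _

variable [Fintype ιB] [DecidableEq ιA]

lemma trace_mul_ptraceA (M : Matrix (ιA × ιB) (ιA × ιB) ℂ) (G : HMat ιB) :
    (G * ptraceA M).trace = (M * ((1 : HMat ιA) ⊗ₖ G)).trace := by
  rw [ptraceA_eq_sum_submatrix, Matrix.mul_sum, Matrix.trace_sum]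
  simp only [trace_mul_comm G]
  simp [trace, mul_apply, Fintype.sum_prod_type, kroneckerMap_apply, one_apply,
    Finset.sum_ite_irrel]

variable [DecidableEq ιB]

lemma trace_ptraceA (M : Matrix (ιA × ιB) (ιA × ιB) ℂ) : (ptraceA M).trace = M.trace := by
  simpa using trace_mul_ptraceA M 1

lemma ptraceA_kronecker_one_mul_comm (M : Matrix (ιA × ιB) (ιA × ιB) ℂ) (K : HMat ιA) :
    ptraceA ((K ⊗ₖ (1 : HMat ιB)) * M) = ptraceA (M * (K ⊗ₖ (1 : HMat ιB))) := by
  refine ext_iff_trace_mul_left.mpr fun G => ?_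
  rw [trace_mul_ptraceA, trace_mul_ptraceA, mul_assoc, trace_mul_comm]
  simp only [mul_assoc, ← mul_kronecker_mul, one_mul, mul_one]

end PartialTrace

section Steering

variable {ιA ιB A X : Type} [Fintype ιA] [Fintype ιB] [DecidableEq ιA] [DecidableEq ιB]

lemma trace_mul_inducedAssemblage (ρ : Matrix (ιA × ιB) (ιA × ιB) ℂ) (E : A → X → HMat ιA)
    (G : HMat ιB) (a : A) (x : X) :
    (G * inducedAssemblage ρ E a x).trace = (ρ * (E a x ⊗ₖ G)).trace := by
  rw [inducedAssemblage, trace_mul_ptraceA, mul_assoc, ← mul_kronecker_mul, mul_one, one_mul]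

lemma inducedAssemblage_conj_kronecker (ρ : Matrix (ιA × ιB) (ιA × ιB) ℂ)
    (E : A → X → HMat ιA) (K : HMat ιA) (W : HMat ιB) (a : A) (x : X) :
    inducedAssemblage ((K ⊗ₖ W) * ρ * (K ⊗ₖ W)ᴴ) E a x
      = W * inducedAssemblage ρ (fun a x => Kᴴ * E a x * K) a x * Wᴴ := by
  refine ext_iff_trace_mul_left.mpr fun G => ?_
  calc (G * inducedAssemblage ((K ⊗ₖ W) * ρ * (K ⊗ₖ W)ᴴ) E a x).trace
      = (ρ * ((K ⊗ₖ W)ᴴ * (E a x ⊗ₖ G) * (K ⊗ₖ W))).trace := by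
        rw [trace_mul_inducedAssemblage]
        simp only [mul_assoc]
        rw [trace_mul_comm]
        simp only [mul_assoc]
    _ = (ρ * ((Kᴴ * E a x * K) ⊗ₖ (Wᴴ * G * W))).trace := by
        rw [conjTranspose_kronecker, mul_kronecker_mul, mul_kronecker_mul]
    _ = ((Wᴴ * G * W) * inducedAssemblage ρ (fun a x => Kᴴ * E a x * K) a x).trace :=
        (trace_mul_inducedAssemblage _ _ _ _ _).symm
    _ = (G * (W * inducedAssemblage ρ (fun a x => Kᴴ * E a x * K) a x * Wᴴ)).trace := by
        simp only [mul_assoc]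
        rw [trace_mul_comm]
        simp only [mul_assoc]

lemma IsDensity.conj {ρ : HMat ιA} (hρ : IsDensity ρ) {U : HMat ιA}
    (hU : U ∈ unitaryGroup ιA ℂ) : IsDensity (U * ρ * Uᴴ) :=
  ⟨hρ.1.mul_mul_conjTranspose_same U, by
    rw [trace_mul_cycle, ← star_eq_conjTranspose, Unitary.star_mul_self_of_mem hU, one_mul, hρ.2]⟩

variable [Fintype A]

lemma IsPOVM.conj {E : A → X → HMat ιA} (hE : IsPOVM E) {K : HMat ιA}
    (hK : K ∈ unitaryGroup ιA ℂ) : IsPOVM fun a x => Kᴴ * E a x * K := by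
  refine ⟨fun a x => (hE.1 a x).conjTranspose_mul_mul_same K, fun x => ?_⟩
  rw [← Matrix.sum_mul, ← Matrix.mul_sum, hE.2 x, mul_one, ← star_eq_conjTranspose,
    Unitary.star_mul_self_of_mem hK]

lemma IsUnsteerable.conj {σ : A → X → HMat ιB} (hσ : IsUnsteerable σ) {W : HMat ιB}
    (hW : W ∈ unitaryGroup ιB ℂ) : IsUnsteerable fun a x => W * σ a x * Wᴴ := by
  obtain ⟨n, w, p, τ, hw, hw1, hp, hp1, hτ, hστ⟩ := hσ
  refine ⟨n, w, p, fun l => W * τ l * Wᴴ, hw, hw1, hp, hp1, fun l => (hτ l).conj hW,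
    fun a x => ?_⟩
  simp only [hστ, Matrix.mul_sum, Matrix.sum_mul, Matrix.mul_smul, Matrix.smul_mul]

lemma sum_inducedAssemblage {ρ : Matrix (ιA × ιB) (ιA × ιB) ℂ} {E : A → X → HMat ιA}
    (hE : IsPOVM E) (x : X) : ∑ a, inducedAssemblage ρ E a x = ptraceA ρ := by
  refine ext_iff_trace_mul_left.mpr fun G => ?_
  rw [Matrix.mul_sum, Matrix.trace_sum]
  simp only [trace_mul_inducedAssemblage, ← Matrix.trace_sum, ← Matrix.mul_sum, ← sum_kronecker,
    hE.2 x, trace_mul_ptraceA]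

lemma posSemidef_inducedAssemblage {ρ : Matrix (ιA × ιB) (ιA × ιB) ℂ} (hρ : ρ.PosSemidef)
    {E : A → X → HMat ιA} (hE : IsPOVM E) (a : A) (x : X) :
    (inducedAssemblage ρ E a x).PosSemidef := by
  open scoped MatrixOrder in
  obtain ⟨C, hC⟩ := CStarAlgebra.nonneg_iff_eq_star_mul_self.mp (hE.1 a x).nonneg
  have hE' : ρ * (E a x ⊗ₖ (1 : HMat ιB)) = ρ * (C ⊗ₖ (1 : HMat ιB))ᴴ * (C ⊗ₖ 1) := by
    rw [conjTranspose_kronecker, conjTranspose_one, mul_assoc, ← mul_kronecker_mul, mul_one, hC,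
      star_eq_conjTranspose]
  rw [inducedAssemblage, hE', ← ptraceA_kronecker_one_mul_comm, ← mul_assoc]
  exact posSemidef_ptraceA (hρ.mul_mul_conjTranspose_same _)

lemma IsDensity.isAssemblage_inducedAssemblage {ρ : Matrix (ιA × ιB) (ιA × ιB) ℂ}
    (hρ : IsDensity ρ) {E : A → X → HMat ιA} (hE : IsPOVM E) :
    IsAssemblage (inducedAssemblage ρ E) := by
  refine ⟨posSemidef_inducedAssemblage hρ.1 hE, fun x x' => ?_, fun x => ?_⟩
  · rw [sum_inducedAssemblage hE, sum_inducedAssemblage hE]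
  · rw [sum_inducedAssemblage hE, trace_ptraceA, hρ.2]

def IsUnsteerableState (A X : Type) [Fintype A] (ρ : Matrix (ιA × ιB) (ιA × ιB) ℂ) : Prop :=
  ∀ E : A → X → HMat ιA, IsPOVM E → IsUnsteerable (inducedAssemblage ρ E)

lemma IsUnsteerableState.conj_kronecker {ρ : Matrix (ιA × ιB) (ιA × ιB) ℂ}
    (hρ : IsUnsteerableState A X ρ) {K : HMat ιA} (hK : K ∈ unitaryGroup ιA ℂ) {W : HMat ιB}
    (hW : W ∈ unitaryGroup ιB ℂ) : IsUnsteerableState A X ((K ⊗ₖ W) * ρ * (K ⊗ₖ W)ᴴ) := by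
  intro E hE
  simp_rw [funext₂ (inducedAssemblage_conj_kronecker ρ E K W)]
  exact (hρ _ (hE.conj hK)).conj hW

variable [Fintype X]

def steeringOperator (E : A → X → HMat ιA) (F : A → X → HMat ιB) :
    Matrix (ιA × ιB) (ιA × ιB) ℂ :=
  ∑ x, ∑ a, E a x ⊗ₖ F a x

variable {F : A → X → HMat ιB}

lemma steeringValue_inducedAssemblage (ρ : Matrix (ιA × ιB) (ιA × ιB) ℂ) (E : A → X → HMat ιA) :
    steeringValue F (inducedAssemblage ρ E) = (ρ * steeringOperator E F).trace.re := by
  simp only [steeringValue, steeringOperator, trace_mul_inducedAssemblage, Matrix.mul_sum,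
    Matrix.trace_sum, Complex.re_sum]

omit [Fintype ιA] [DecidableEq ιA] [DecidableEq ιB] in
lemma steeringValue_le_steeringBound (hF : 0 < steeringBound F) {σ : A → X → HMat ιB}
    (hσ : IsAssemblage σ) (hσ' : IsUnsteerable σ) : steeringValue F σ ≤ steeringBound F := by
  by_cases hbdd : BddAbove {r | ∃ σ, IsAssemblage σ ∧ IsUnsteerable σ ∧ r = steeringValue F σ}
  · exact le_csSup hbdd ⟨σ, hσ, hσ', rfl⟩
  · rw [steeringBound, Real.sSup_of_not_bddAbove hbdd] at hF
    exact absurd hF (lt_irrefl 0)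

lemma IsUnsteerableState.re_trace_mul_steeringOperator_le {ρ : Matrix (ιA × ιB) (ιA × ιB) ℂ}
    (hρ : IsUnsteerableState A X ρ) (hρd : IsDensity ρ) (hF : 0 < steeringBound F)
    {E : A → X → HMat ιA} (hE : IsPOVM E) :
    (ρ * steeringOperator E F).trace.re ≤ steeringBound F := by
  rw [← steeringValue_inducedAssemblage]
  exact steeringValue_le_steeringBound hF (hρd.isAssemblage_inducedAssemblage hE) (hρ E hE)

end Steering

section MaxEnt

variable {ι : Type} [Fintype ι] [DecidableEq ι]

def maxEntVec (ι : Type) [DecidableEq ι] : ι × ι → ℂ := fun p => if p.1 = p.2 then 1 else 0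

omit [Fintype ι] in
lemma star_maxEntVec : star (maxEntVec ι) = maxEntVec ι := by
  ext p
  simp [maxEntVec, apply_ite]

lemma maxEnt_eq_smul_vecMulVec :
    maxEnt ι = (Fintype.card ι : ℂ)⁻¹ • vecMulVec (maxEntVec ι) (maxEntVec ι) := by
  ext p q
  by_cases hp : p.1 = p.2 <;> by_cases hq : q.1 = q.2 <;>
    simp [maxEnt, maxEntVec, vecMulVec_apply, hp, hq]

lemma posSemidef_maxEnt : (maxEnt ι).PosSemidef := by
  rw [maxEnt_eq_smul_vecMulVec]
  refine PosSemidef.smul ?_ (by positivity)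
  simpa only [star_maxEntVec] using posSemidef_vecMulVec_self_star (maxEntVec ι)

lemma maxEnt_mul_mul_maxEnt (M : Matrix (ι × ι) (ι × ι) ℂ) :
    maxEnt ι * M * maxEnt ι = (maxEnt ι * M).trace • maxEnt ι := by
  simp only [maxEnt_eq_smul_vecMulVec, Matrix.smul_mul, Matrix.mul_smul, vecMulVec_mul,
    vecMul_vecMulVec, vecMulVec_smul, trace_smul, trace_vecMulVec, smul_smul,
    dotProduct_comm (maxEntVec ι ᵥ* M), smul_eq_mul, mul_comm]

lemma trace_maxEnt [Nonempty ι] : (maxEnt ι).trace = 1 := by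
  simp [maxEnt_eq_smul_vecMulVec, dotProduct, maxEntVec, Fintype.sum_prod_type]

lemma maxEnt_mul_maxEnt [Nonempty ι] : maxEnt ι * maxEnt ι = maxEnt ι := by
  simpa [trace_maxEnt] using maxEnt_mul_mul_maxEnt (1 : Matrix (ι × ι) (ι × ι) ℂ)

lemma maxEntVec_vecMul_kronecker_map_conj {W : HMat ι} (hW : W ∈ unitaryGroup ι ℂ) :
    maxEntVec ι ᵥ* (W ⊗ₖ W.map (starRingEnd ℂ)) = maxEntVec ι := by
  ext ⟨p, q⟩
  have := Matrix.ext_iff.mpr (Unitary.star_mul_self_of_mem hW) q p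
  simp only [mul_apply, star_apply, one_apply] at this
  simpa [vecMul, dotProduct, Fintype.sum_prod_type, maxEntVec, kroneckerMap_apply, mul_comm,
    eq_comm] using this

lemma maxEnt_mul_kronecker_map_conj {W : HMat ι} (hW : W ∈ unitaryGroup ι ℂ) :
    maxEnt ι * (W ⊗ₖ W.map (starRingEnd ℂ)) = maxEnt ι := by
  rw [maxEnt_eq_smul_vecMulVec, Matrix.smul_mul, vecMulVec_mul,
    maxEntVec_vecMul_kronecker_map_conj hW]

lemma ptraceA_maxEnt : ptraceA (maxEnt ι) = (Fintype.card ι : ℂ)⁻¹ • 1 := by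
  ext j j'
  simp [ptraceA, maxEnt, one_apply, ite_and, eq_comm]

lemma card_mul_trace_maxEnt_mul_le_sum_trace [Nonempty ι] {V : Type} [Fintype V]
    (W : V → HMat ι) (hW : ∀ v, W v ∈ unitaryGroup ι ℂ)
    (hsum : ∑ v, W v ⊗ₖ (W v).map (starRingEnd ℂ) = (Fintype.card V : ℂ) • maxEnt ι)
    {B T : Matrix (ι × ι) (ι × ι) ℂ} (hB : B.PosSemidef) (hT : T.PosSemidef) :
    (Fintype.card V : ℂ) * (maxEnt ι * B).trace * (maxEnt ι * T).trace ≤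
      ∑ v, ((W v ⊗ₖ (W v).map (starRingEnd ℂ)) * B * (W v ⊗ₖ (W v).map (starRingEnd ℂ))ᴴ
        * T).trace := by
  set G := fun v => W v ⊗ₖ (W v).map (starRingEnd ℂ)
  set S := ∑ v, G v * B * (G v)ᴴ
  have hΨG : ∀ v, maxEnt ι * G v = maxEnt ι := fun v => maxEnt_mul_kronecker_map_conj (hW v)
  have hGΨ : ∀ v, (G v)ᴴ * maxEnt ι = maxEnt ι := fun v => by
    rw [← posSemidef_maxEnt.1.eq, ← conjTranspose_mul, hΨG]
  have hsumG : ∑ v, G v = (Fintype.card V : ℂ) • maxEnt ι := hsum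
  have hΨS : maxEnt ι * S = ((Fintype.card V : ℂ) * (maxEnt ι * B).trace) • maxEnt ι := by
    calc maxEnt ι * S = maxEnt ι * B * (∑ v, G v)ᴴ := by
          simp only [S, Matrix.mul_sum, conjTranspose_sum, ← mul_assoc, hΨG]
      _ = _ := by
          rw [hsumG, conjTranspose_smul, posSemidef_maxEnt.1.eq, Matrix.mul_smul,
            maxEnt_mul_mul_maxEnt, smul_smul]
          simp
  have hSΨ : S * maxEnt ι = ((Fintype.card V : ℂ) * (maxEnt ι * B).trace) • maxEnt ι := by
    calc S * maxEnt ι = (∑ v, G v) * (B * maxEnt ι) := by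
          simp only [S, Matrix.sum_mul, mul_assoc, hGΨ]
      _ = _ := by
          rw [hsumG, Matrix.smul_mul, ← mul_assoc, maxEnt_mul_mul_maxEnt, smul_smul]
  have hS : S.PosSemidef := posSemidef_sum _ fun v _ => hB.mul_mul_conjTranspose_same _
  have := (posSemidef_sub_smul_of_mul_eq posSemidef_maxEnt.1 maxEnt_mul_maxEnt hS hΨS
    hSΨ).trace_mul_nonneg hT
  rw [Matrix.sub_mul, trace_sub, Matrix.smul_mul, trace_smul, smul_eq_mul, sub_nonneg] at this
  simpa [S, Matrix.sum_mul, Matrix.trace_sum] using this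

end MaxEnt

section Weyl

variable {G : Type} [AddCommGroup G] [Fintype G] [DecidableEq G]

def weyl (g : G) (ψ : AddChar G ℂ) : HMat G :=
  Matrix.of fun p q => if p = q + g then ψ q else 0

lemma weyl_mem_unitaryGroup (g : G) (ψ : AddChar G ℂ) : weyl g ψ ∈ unitaryGroup G ℂ := by
  rw [mem_unitaryGroup_iff']
  ext p q
  by_cases h : p = q
  · subst h
    simp [weyl, mul_apply, Complex.conj_mul', ψ.norm_apply]
  · simp [weyl, mul_apply, h, Ne.symm h]

lemma sum_weyl_kronecker :
    ∑ v : G × AddChar G ℂ, weyl v.1 v.2 ⊗ₖ (weyl v.1 v.2).map (starRingEnd ℂ) =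
      (Fintype.card (G × AddChar G ℂ) : ℂ) • maxEnt G := by
  ext ⟨p, q⟩ ⟨r, s⟩
  by_cases hrs : r = s
  · subst hrs
    by_cases hpq : p = q <;>
      simp [Matrix.sum_apply, Fintype.sum_prod_type, weyl, kroneckerMap_apply, maxEnt, apply_ite,
        ite_mul, AddChar.sum_mul_conj, ← sub_eq_iff_eq_add', hpq]
  · simp [Matrix.sum_apply, Fintype.sum_prod_type, weyl, kroneckerMap_apply, maxEnt, apply_ite,
      ite_mul, AddChar.sum_mul_conj, hrs]

lemma IsUnsteerableState.re_trace_maxEnt_mul_steeringValue_le {A X : Type} [Fintype A]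
    [Fintype X] {σ : Matrix (G × G) (G × G) ℂ} (hσ : IsUnsteerableState A X σ)
    (hσd : IsDensity σ) {F : A → X → HMat G} (hF : IsSteeringFunctional F)
    (hω : 0 < steeringBound F) {E : A → X → HMat G} (hE : IsPOVM E) :
    (maxEnt G * σ).trace.re * steeringValue F (inducedAssemblage (maxEnt G) E) ≤
      steeringBound F := by
  have hT : (steeringOperator E F).PosSemidef :=
    posSemidef_sum _ fun x _ => posSemidef_sum _ fun a _ => (hE.1 a x).kronecker (hF a x)
  have htwirl := card_mul_trace_maxEnt_mul_le_sum_trace (fun v : G × AddChar G ℂ => weyl v.1 v.2)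
    (fun v => weyl_mem_unitaryGroup _ _) sum_weyl_kronecker hσd.1 hT
  have hterm : ∀ v : G × AddChar G ℂ,
      ((weyl v.1 v.2 ⊗ₖ (weyl v.1 v.2).map (starRingEnd ℂ)) * σ *
        (weyl v.1 v.2 ⊗ₖ (weyl v.1 v.2).map (starRingEnd ℂ))ᴴ * steeringOperator E F).trace.re
        ≤ steeringBound F := fun v => by
    have hW := weyl_mem_unitaryGroup v.1 v.2
    have hW' : (weyl v.1 v.2).map (starRingEnd ℂ) ∈ unitaryGroup G ℂ :=
      map_star_mem_unitaryGroup_iff.mpr hW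
    exact (hσ.conj_kronecker hW hW').re_trace_mul_steeringOperator_le
      (hσd.conj (kronecker_mem_unitary hW hW')) hω hE
  have hre := (Complex.le_def.mp htwirl).1
  simp only [Complex.re_sum, Complex.mul_re, Complex.mul_im, Complex.natCast_re,
    Complex.natCast_im, posSemidef_maxEnt.im_trace_mul_eq_zero hσd.1, zero_mul, mul_zero,
    add_zero, sub_zero] at hre
  have := hre.trans (Finset.sum_le_sum fun v _ => hterm v)
  rw [Finset.sum_const, Finset.card_univ, nsmul_eq_mul, mul_assoc] at this
  rw [steeringValue_inducedAssemblage]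
  exact le_of_mul_le_mul_left this (by exact_mod_cast Fintype.card_pos)

end Weyl

section TensorPower

variable (k : ℕ) {ι : Type}

lemma tensorPower_eq_submatrix (M : Matrix (ι × ι) (ι × ι) ℂ) :
    tensorPower M k = (kronPow M k).submatrix (Equiv.arrowProdEquivProdArrow _ _ _).symm
      (Equiv.arrowProdEquivProdArrow _ _ _).symm :=
  rfl

lemma tensorPower_conjTranspose (M : Matrix (ι × ι) (ι × ι) ℂ) :
    tensorPower Mᴴ k = (tensorPower M k)ᴴ := by
  simp only [tensorPower_eq_submatrix, conjTranspose_submatrix, kronPow_conjTranspose]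

variable [Fintype ι]

lemma tensorPower_mul (M N : Matrix (ι × ι) (ι × ι) ℂ) :
    tensorPower (M * N) k = tensorPower M k * tensorPower N k := by
  simp only [tensorPower_eq_submatrix, submatrix_mul_equiv, kronPow_mul]

lemma trace_tensorPower (M : Matrix (ι × ι) (ι × ι) ℂ) :
    (tensorPower M k).trace = M.trace ^ k := by
  rw [← trace_kronPow, tensorPower_eq_submatrix]
  exact Fintype.sum_equiv _ _ _ fun _ => rfl

lemma IsDensity.tensorPower {ρ : Matrix (ι × ι) (ι × ι) ℂ} (hρ : IsDensity ρ) :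
    IsDensity (tensorPower ρ k) := by
  classical
  open scoped MatrixOrder in
  obtain ⟨C, hC⟩ := CStarAlgebra.nonneg_iff_eq_star_mul_self.mp hρ.1.nonneg
  refine ⟨?_, by rw [trace_tensorPower, hρ.2, one_pow]⟩
  rw [hC, star_eq_conjTranspose, tensorPower_mul, tensorPower_conjTranspose]
  exact posSemidef_conjTranspose_mul_self _

variable [DecidableEq ι]

lemma tensorPower_maxEnt : tensorPower (maxEnt ι) k = maxEnt (Fin k → ι) := by
  ext p q
  simp [tensorPower, maxEnt, Fintype.prod_ite_zero, funext_iff, forall_and]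

lemma re_trace_maxEnt_mul_tensorPower {ρ : Matrix (ι × ι) (ι × ι) ℂ} (hρ : ρ.PosSemidef) :
    (maxEnt (Fin k → ι) * tensorPower ρ k).trace.re = (maxEnt ι * ρ).trace.re ^ k := by
  have hreal : (maxEnt ι * ρ).trace = ((maxEnt ι * ρ).trace.re : ℂ) :=
    Complex.ext rfl (posSemidef_maxEnt.im_trace_mul_eq_zero hρ)
  rw [← tensorPower_maxEnt, ← tensorPower_mul, trace_tensorPower, hreal, ← Complex.ofReal_pow,
    Complex.ofReal_re, Complex.ofReal_re]

lemma tensorPower_conj_kronecker_one (U : HMat ι) (ρ : Matrix (ι × ι) (ι × ι) ℂ) :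
    tensorPower ((U ⊗ₖ (1 : HMat ι)) * ρ * (U ⊗ₖ (1 : HMat ι))ᴴ) k =
      (kronPow U k ⊗ₖ (1 : HMat (Fin k → ι))) * tensorPower ρ k *
        (kronPow U k ⊗ₖ (1 : HMat (Fin k → ι)))ᴴ := by
  have h : tensorPower (U ⊗ₖ (1 : HMat ι)) k = kronPow U k ⊗ₖ (1 : HMat (Fin k → ι)) := by
    ext p q
    simp [tensorPower, kronPow, kroneckerMap_apply, one_apply, Fintype.prod_ite_zero, funext_iff]
  rw [tensorPower_mul, tensorPower_mul, tensorPower_conjTranspose, h]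

end TensorPower

lemma exists_one_lt_pow_mul_of_rpow_inv_sSup_lt {S : Set ℝ} {s₀ : ℝ} (hs₀ : s₀ ∈ S)
    (hs₀pos : 0 < s₀) {k : ℕ} (hk : k ≠ 0) {p : ℝ} (h : (1 / sSup S) ^ ((1 : ℝ) / k) < p) :
    ∃ s ∈ S, 1 < p ^ k * s := by
  have hS : 0 ≤ sSup S := by
    by_cases hb : BddAbove S
    · exact hs₀pos.le.trans (le_csSup hb hs₀)
    · exact (Real.sSup_of_not_bddAbove hb).ge
  have hp : 0 < p := (Real.rpow_nonneg (by positivity) _).trans_lt h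
  suffices ∃ s ∈ S, 1 / p ^ k < s by
    obtain ⟨s, hs, hlt⟩ := this
    exact ⟨s, hs, by rwa [div_lt_iff₀' (by positivity)] at hlt⟩
  -- If `S` is unbounded then `sSup S = 0`, and the hypothesis only says `0 < p`.
  by_cases hb : BddAbove S
  · refine exists_lt_of_lt_csSup ⟨s₀, hs₀⟩ ?_
    have hpow := pow_lt_pow_left₀ h (by positivity) hk
    rw [one_div (k : ℝ), Real.rpow_inv_natCast_pow (by positivity) hk] at hpow
    rwa [one_div_lt (by positivity) ((hs₀pos.trans_le (le_csSup hb hs₀)))]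
  · exact not_bddAbove_iff.mp hb (1 / p ^ k)

lemma exists_unitary_lt_of_lt_fef {ι : Type} [Fintype ι] [DecidableEq ι]
    {ρ : Matrix (ι × ι) (ι × ι) ℂ} {t : ℝ} (h : t < fef ρ) :
    ∃ U ∈ unitaryGroup ι ℂ,
      t < (maxEnt ι * ((U ⊗ₖ (1 : HMat ι)) * ρ * (U ⊗ₖ (1 : HMat ι))ᴴ)).trace.re := by
  unfold fef at h
  obtain ⟨_, ⟨U, hU, rfl⟩, hlt⟩ := exists_lt_of_lt_csSup (by exact ⟨_, 1, one_mem _, rfl⟩) h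
  exact ⟨U, hU, hlt⟩

section UniformPOVM

variable {ι A X : Type} [Fintype ι] [DecidableEq ι] [Fintype A]

def uniformPOVM (ι A X : Type) [Fintype A] [DecidableEq ι] : A → X → HMat ι :=
  fun _ _ => (Fintype.card A : ℂ)⁻¹ • 1

lemma isPOVM_uniformPOVM [Nonempty A] : IsPOVM (uniformPOVM ι A X) := by
  refine ⟨fun _ _ => PosSemidef.one.smul (inv_nonneg.mpr (Nat.cast_nonneg _)), fun _ => ?_⟩
  simp only [uniformPOVM, Finset.sum_const, Finset.card_univ]
  rw [← Nat.cast_smul_eq_nsmul ℂ, smul_smul,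
    mul_inv_cancel₀ (Nat.cast_ne_zero.mpr Fintype.card_ne_zero), one_smul]

variable [Fintype X]

omit [DecidableEq ι] in
lemma sum_re_trace_pos_of_steeringBound_pos {F : A → X → HMat ι} (hF : IsSteeringFunctional F)
    (hω : 0 < steeringBound F) : 0 < ∑ x, ∑ a, (F a x).trace.re := by
  have hnonneg : ∀ a x, 0 ≤ (F a x).trace.re := fun a x =>
    (Complex.nonneg_iff.mp (hF a x).trace_nonneg).1
  refine lt_of_le_of_ne (Finset.sum_nonneg fun x _ => Finset.sum_nonneg fun a _ => hnonneg a x)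
    fun hsum => hω.not_ge ?_
  have hF0 : ∀ a x, F a x = 0 := fun a x => by
    refine (hF a x).trace_eq_zero_iff.mp (Complex.ext ?_ ?_)
    · rw [eq_comm, Finset.sum_eq_zero_iff_of_nonneg fun x _ => Finset.sum_nonneg
        fun a _ => hnonneg a x] at hsum
      exact (Finset.sum_eq_zero_iff_of_nonneg fun a _ => hnonneg a x).mp
        (hsum x (Finset.mem_univ _)) a (Finset.mem_univ _)
    · exact (Complex.nonneg_iff.mp (hF a x).trace_nonneg).2.symm
  exact Real.sSup_nonpos (by rintro _ ⟨σ, -, -, rfl⟩; simp [steeringValue, hF0])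

lemma steeringValue_inducedAssemblage_maxEnt_uniformPOVM (F : A → X → HMat ι) :
    steeringValue F (inducedAssemblage (maxEnt ι) (uniformPOVM ι A X)) =
      ((Fintype.card A : ℝ) * Fintype.card ι)⁻¹ * ∑ x, ∑ a, (F a x).trace.re := by
  simp only [steeringValue, trace_mul_inducedAssemblage, uniformPOVM, smul_kronecker,
    Matrix.mul_smul, trace_smul, ← trace_mul_ptraceA, ptraceA_maxEnt, mul_one, smul_eq_mul,
    Finset.mul_sum]
  refine Finset.sum_congr rfl fun x _ => Finset.sum_congr rfl fun a _ => ?_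
  rw [← mul_assoc, ← mul_inv, ← Complex.re_ofReal_mul]
  push_cast
  rfl

lemma steeringFraction_uniformPOVM_pos [Nonempty ι] [Nonempty A] {F : A → X → HMat ι}
    (hF : IsSteeringFunctional F) (hω : 0 < steeringBound F) :
    0 < steeringFraction (inducedAssemblage (maxEnt ι) (uniformPOVM ι A X)) F := by
  rw [steeringFraction, steeringValue_inducedAssemblage_maxEnt_uniformPOVM]
  have hcard : (0 : ℝ) < Fintype.card A * Fintype.card ι := by positivity
  exact div_pos (mul_pos (inv_pos.mpr hcard) (sum_re_trace_pos_of_steeringBound_pos hF hω)) hω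

end UniformPOVM

theorem stmt5_general {A X : Type} [Fintype A] [Fintype X] [Nonempty A]
    (d k : ℕ) (hd : 0 < d) (hk : 1 ≤ k)
    (ρ : Matrix (Fin d × Fin d) (Fin d × Fin d) ℂ) (hρ : IsDensity ρ)
    (F : A → X → HMat (Fin k → Fin d)) (hF : IsSteeringFunctional F)
    (hωs : 0 < steeringBound F)
    (h : fef ρ > (1 / LVs (maxEnt (Fin k → Fin d)) F) ^ ((1 : ℝ) / k)) :
    ∃ (A' X' : Type) (_ : Fintype A') (_ : Fintype X')
      (E : A' → X' → HMat (Fin k → Fin d)),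
      IsPOVM E ∧ ¬ IsUnsteerable (inducedAssemblage (tensorPower ρ k) E) := by
  have : NeZero d := ⟨hd.ne'⟩
  by_contra! hsteer
  obtain ⟨U, hU, hUρ⟩ := exists_unitary_lt_of_lt_fef h
  set ρU := (U ⊗ₖ (1 : HMat (Fin d))) * ρ * (U ⊗ₖ (1 : HMat (Fin d)))ᴴ
  have hρU : IsDensity ρU := hρ.conj (kronecker_mem_unitary hU (one_mem _))
  obtain ⟨_, ⟨E, hE, rfl⟩, hEval⟩ := exists_one_lt_pow_mul_of_rpow_inv_sSup_lt
    (by exact ⟨_, isPOVM_uniformPOVM, rfl⟩) (steeringFraction_uniformPOVM_pos hF hωs) (by omega)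
    hUρ
  have hunst : IsUnsteerableState A X (tensorPower ρU k) := by
    rw [tensorPower_conj_kronecker_one]
    exact IsUnsteerableState.conj_kronecker (fun E hE => hsteer A X inferInstance inferInstance E hE)
      (kronPow_mem_unitaryGroup k hU) (one_mem _)
  have key := hunst.re_trace_maxEnt_mul_steeringValue_le (hρU.tensorPower k) hF hωs hE
  rw [re_trace_maxEnt_mul_tensorPower k hρU.1] at key
  rw [steeringFraction, mul_div_assoc', one_lt_div hωs] at hEval
  linarith

/-- if `F(ρ) > [1 / LV_s(|Ψ_{d^k}⁺⟩⟨Ψ_{d^k}⁺|, F)]^{1/k}` then `ρ^⊗k`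
(regrouped as a bipartite state on `ℂ^{d^k} ⊗ ℂ^{d^k}`) is steerable from Alice to Bob. -/
theorem stmt5 {A X : Type} [Fintype A] [Fintype X] [Nonempty A] [Nonempty X]
    (d k : ℕ) (hd : 0 < d) (hk : 1 ≤ k)
    (ρ : Matrix (Fin d × Fin d) (Fin d × Fin d) ℂ) (hρ : IsDensity ρ)
    (F : A → X → HMat (Fin k → Fin d)) (hF : IsSteeringFunctional F)
    (hωs : 0 < steeringBound F)
    (h : fef ρ > (1 / LVs (maxEnt (Fin k → Fin d)) F) ^ ((1 : ℝ) / k)) :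
    ∃ (A' X' : Type) (_ : Fintype A') (_ : Fintype X')
      (E : A' → X' → HMat (Fin k → Fin d)),
      IsPOVM E ∧ ¬ IsUnsteerable (inducedAssemblage (tensorPower ρ k) E) :=
  stmt5_general d k hd hk ρ hρ F hF hωs h

end QSteer

end
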